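/- arXiv:2108.01827 — 2 statements merged into one kernel-verified Lean document; each statement's English description precedes it below -/
import Mathlib

section
/- If h(x) = Σ_{k=0}^{d} c_k x^k is a real polynomial of degree d with all real roots and c_0 ≠ 0, c_d ≠ 0, then for every 0 < r < d one has c_r² − ((r+1)/r)·c_{r−1}·c_{r+1} > 0. -/
/-!
Differentiating `r - 1` times keeps `h` real-rooted (Rolle) and moves `c_{r-1}, c_r, c_{r+1}`,
rescaled by factorials, to the three lowest coefficients. For a real-rooted
`p = C c * ∏ᵢ (X - aᵢ)` one has `p₁² - 2 p₀ p₂ = c² ∑ᵢ ∏_{j ≠ i} aⱼ²`, which is positive unless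
`p₀ = p₁ = 0`; undoing the rescaling gives the claim. That exceptional case never occurs: `c₀ ≠ 0`,
and the inequality at `k` shows that `c_k ≠ 0 = c_{k+1}` forces `c_{k+2} ≠ 0`.
-/

open scoped Nat

namespace Polynomial

theorem Splits.derivative {p : ℝ[X]} (hp : p.Splits) : (Polynomial.derivative p).Splits := by
  rw [splits_iff_card_roots] at hp ⊢
  have := p.card_roots_le_derivative
  have := natDegree_derivative_le p
  have := (Polynomial.derivative p).card_roots'
  omega

theorem Splits.iterate_derivative {p : ℝ[X]} (hp : p.Splits) (k : ℕ) :
    (Polynomial.derivative^[k] p).Splits := by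
  induction k with
  | zero => exact hp
  | succ k ih => rw [Function.iterate_succ_apply']; exact ih.derivative

theorem natDegree_iterate_derivative_pos {R : Type*} [Semiring R] [NoZeroDivisors R] [CharZero R]
    {p : R[X]} {k : ℕ} (hk : k < p.natDegree) : 0 < (derivative^[k] p).natDegree := by
  have hp : p ≠ 0 := by rintro rfl; simp at hk
  have hlead : (derivative^[k] p).coeff (p.natDegree - k) ≠ 0 := by
    rw [coeff_iterate_derivative, Nat.sub_add_cancel hk.le, nsmul_eq_mul]
    refine mul_ne_zero (Nat.cast_ne_zero.2 ?_) (leadingCoeff_ne_zero.2 hp)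
    exact Nat.descFactorial_eq_zero_iff_lt.not.2 hk.not_gt
  exact (Nat.sub_pos_of_lt hk).trans_le (le_natDegree_of_ne_zero hlead)

theorem coeff_iterate_derivative_eq_factorial_div {K : Type*} [Field K] [CharZero K] (p : K[X])
    (k m : ℕ) : (derivative^[k] p).coeff m = ((m + k)! / m ! : K) * p.coeff (m + k) := by
  rw [coeff_iterate_derivative, nsmul_eq_mul,
    ← Nat.factorial_mul_descFactorial (Nat.le_add_left k m), Nat.add_sub_cancel, Nat.cast_mul,
    mul_div_cancel_left₀ _ (Nat.cast_ne_zero.2 m.factorial_ne_zero)]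

section CommRing

variable {R : Type*} [CommRing R]

def lowCoeffForm (p : R[X]) : R :=
  p.coeff 1 ^ 2 - 2 * p.coeff 0 * p.coeff 2

theorem lowCoeffForm_C_mul (c : R) (p : R[X]) :
    lowCoeffForm (C c * p) = c ^ 2 * lowCoeffForm p := by
  simp only [lowCoeffForm, coeff_C_mul]
  ring

theorem lowCoeffForm_X_sub_C_mul (a : R) (q : R[X]) :
    lowCoeffForm ((X - C a) * q) = q.coeff 0 ^ 2 + a ^ 2 * lowCoeffForm q := by
  simp only [lowCoeffForm, sub_mul, coeff_sub, coeff_C_mul, coeff_X_mul, mul_coeff_zero,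
    coeff_X_zero, coeff_C_zero, zero_mul]
  ring

end CommRing

section LinearOrder

variable {R : Type*} [CommRing R] [LinearOrder R] [IsStrictOrderedRing R]

theorem lowCoeffForm_prod_X_sub_C_nonneg (s : Multiset R) :
    0 ≤ lowCoeffForm (s.map (X - C ·)).prod := by
  induction s using Multiset.induction_on with
  | empty => simp [lowCoeffForm, coeff_one]
  | cons a t ih =>
    rw [Multiset.map_cons, Multiset.prod_cons, lowCoeffForm_X_sub_C_mul]
    positivity

theorem lowCoeffForm_prod_X_sub_C_pos {s : Multiset R} (hs : s ≠ 0)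
    (h : ((s.map (X - C ·)).prod).coeff 0 ≠ 0 ∨ ((s.map (X - C ·)).prod).coeff 1 ≠ 0) :
    0 < lowCoeffForm (s.map (X - C ·)).prod := by
  induction s using Multiset.induction_on with
  | empty => exact absurd rfl hs
  | cons a t ih =>
    simp only [Multiset.map_cons, Multiset.prod_cons, lowCoeffForm_X_sub_C_mul] at h ⊢
    set q := (t.map (X - C ·)).prod
    rcases eq_or_ne (q.coeff 0) 0 with hq0 | hq0
    · have h1 : a * q.coeff 1 ≠ 0 := by
        simpa [coeff_X_sub_C_mul (a := 0), hq0] using h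
      have ht : t ≠ 0 := by
        rintro rfl
        simp [q] at hq0
      have := ih ht (.inr (right_ne_zero_of_mul h1))
      have := left_ne_zero_of_mul h1
      rw [hq0]
      positivity
    · have := lowCoeffForm_prod_X_sub_C_nonneg t
      positivity

end LinearOrder

theorem Splits.lowCoeffForm_pos {K : Type*} [Field K] [LinearOrder K] [IsStrictOrderedRing K]
    {p : K[X]} (hp : p.Splits) (hdeg : 0 < p.natDegree) (h : p.coeff 0 ≠ 0 ∨ p.coeff 1 ≠ 0) :
    0 < lowCoeffForm p := by
  have hlc : p.leadingCoeff ≠ 0 := leadingCoeff_ne_zero.2 (ne_zero_of_natDegree_gt hdeg)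
  rw [hp.eq_prod_roots] at h ⊢
  simp only [coeff_C_mul] at h
  have := lowCoeffForm_prod_X_sub_C_pos (hp.roots_ne_zero hdeg.ne')
    (h.imp right_ne_zero_of_mul right_ne_zero_of_mul)
  rw [lowCoeffForm_C_mul]
  positivity

theorem lowCoeffForm_iterate_derivative (p : ℝ[X]) (k : ℕ) :
    lowCoeffForm (derivative^[k] p) = (k ! : ℝ) ^ 2 * (k + 1) *
      ((k + 1) * p.coeff (k + 1) ^ 2 - (k + 2) * p.coeff k * p.coeff (k + 2)) := by
  simp only [lowCoeffForm, coeff_iterate_derivative_eq_factorial_div, zero_add, Nat.add_comm 1 k,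
    Nat.add_comm 2 k]
  push_cast [Nat.factorial_succ]
  field_simp
  ring

theorem Splits.coeff_mul_coeff_lt {p : ℝ[X]} (hp : p.Splits) {k : ℕ} (hk : k < p.natDegree)
    (h : p.coeff k ≠ 0 ∨ p.coeff (k + 1) ≠ 0) :
    (k + 2) * p.coeff k * p.coeff (k + 2) < (k + 1) * p.coeff (k + 1) ^ 2 := by
  have hq := (hp.iterate_derivative k).lowCoeffForm_pos (natDegree_iterate_derivative_pos hk)
    (by simpa [coeff_iterate_derivative_eq_factorial_div, add_comm, Nat.factorial_ne_zero] using h)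
  rw [lowCoeffForm_iterate_derivative, mul_pos_iff_of_pos_left (by positivity)] at hq
  linarith

theorem Splits.coeff_ne_zero_or_coeff_succ_ne_zero {p : ℝ[X]} (hp : p.Splits)
    (h0 : p.coeff 0 ≠ 0) {k : ℕ} (hk : k < p.natDegree) :
    p.coeff k ≠ 0 ∨ p.coeff (k + 1) ≠ 0 := by
  induction k with
  | zero => exact .inl h0
  | succ k ih =>
    refine or_iff_not_imp_left.2 fun hk1 ↦ ?_
    have hck : p.coeff k ≠ 0 := (ih (by omega)).resolve_right hk1
    have := hp.coeff_mul_coeff_lt (by omega) (.inl hck)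
    rw [not_not.1 hk1, zero_pow two_ne_zero, mul_zero] at this
    exact right_ne_zero_of_mul this.ne

end Polynomial

theorem schur_coeff_ineq_general (h : Polynomial ℝ) (d : ℕ) (hdeg : h.natDegree = d)
    (hsplit : (h.map (RingHom.id ℝ)).Splits) (hc0 : h.coeff 0 ≠ 0)
    (r : ℕ) (hr0 : 0 < r) (hrd : r < d) :
    (h.coeff r) ^ 2 - ((r + 1 : ℝ) / (r : ℝ)) * h.coeff (r - 1) * h.coeff (r + 1) > 0 := by
  have hs : h.Splits := by simpa using hsplit
  obtain ⟨k, rfl⟩ : ∃ k, r = k + 1 := ⟨r - 1, by omega⟩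
  have hk : k < h.natDegree := by omega
  have key := hs.coeff_mul_coeff_lt hk (hs.coeff_ne_zero_or_coeff_succ_ne_zero hc0 hk)
  rw [Nat.add_sub_cancel, gt_iff_lt, sub_pos, div_mul_eq_mul_div, div_mul_eq_mul_div,
    div_lt_iff₀ (by positivity)]
  push_cast
  linarith

/-- Schur's coefficient inequality for hyperbolic polynomials. -/
theorem schur_coeff_ineq (h : Polynomial ℝ) (d : ℕ) (hdeg : h.natDegree = d)
    (hsplit : (h.map (RingHom.id ℝ)).Splits) (hc0 : h.coeff 0 ≠ 0) (hcd : h.coeff d ≠ 0)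
    (r : ℕ) (hr0 : 0 < r) (hrd : r < d) :
    (h.coeff r) ^ 2 - ((r + 1 : ℝ) / (r : ℝ)) * h.coeff (r - 1) * h.coeff (r + 1) > 0 :=
  schur_coeff_ineq_general h d hdeg hsplit hc0 r hr0 hrd
end

section
/- A sequence {γ_k}_{k≥0} of nonnegative reals is an order-d multiplier sequence of type I for all shifts n ≥ N if and only if for every n ≥ N the Jensen polynomial J_γ^{d,n}(x) = Σ_{k=0}^{d} C(d,k) γ_{k+n} x^k has all real (necessarily nonpositive) roots. -/
/-!
Applying `Γ` to `(1 + x)^d` gives the Jensen polynomial, which settles one direction. Conversely,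
for `deg p ≤ d` the polynomial `Γ p` is the Schur–Szegő composition `Σ p_k J_k / C(d,k) x^k` of `p`
with the Jensen polynomial `J`, whose roots are `≤ 0` because its coefficients are `≥ 0`.

If `J = c ∏ (x + b_i)` with exactly `d` roots `-b_i < 0`, the composition evaluated at `y` equals,
up to a nonzero factor, the iterated polar derivative of `p` at the points `y / b_i`. By Laguerre's
theorem, the polar derivative at a point of the open upper half-plane of a polynomial without zeros
there has no zeros there either, so the composition has no non-real zeros (conjugation handles the
lower half-plane).

A general `J` is reduced to this case through `J(x + ε) (1 + εx)^(d - deg J)` and `ε → 0⁺`: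
real-rootedness survives coefficientwise limits of bounded degree, since a real-rooted `q`
satisfies `c(z)^(deg q) |q_k| ≤ |q(z)|` at every non-real `z`, with `c(z) > 0` independent of `q`.
-/

open Polynomial Finset

/-- A real polynomial has all real roots iff it splits over `ℝ`. -/
def RealRooted (p : Polynomial ℝ) : Prop := (p.map (RingHom.id ℝ)).Splits

/-- The operator `Γ_λ` acting on polynomials by `x^k ↦ λ_k x^k`. -/
noncomputable def GammaOp (l : ℕ → ℝ) (p : Polynomial ℝ) : Polynomial ℝ :=
  ∑ k ∈ Finset.range (p.natDegree + 1), Polynomial.C (l k * p.coeff k) * Polynomial.X ^ k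

/-- The Jensen polynomial of degree `d` and shift `n` of the sequence `γ`. -/
noncomputable def JensenPoly (γ : ℕ → ℝ) (d n : ℕ) : Polynomial ℝ :=
  ∑ k ∈ Finset.range (d + 1), Polynomial.C ((d.choose k : ℝ) * γ (k + n)) * Polynomial.X ^ k

open Filter Topology

theorem realRooted_iff_splits {p : ℝ[X]} : RealRooted p ↔ p.Splits := by
  rw [RealRooted, Polynomial.map_id]

theorem realRooted_zero : RealRooted 0 := realRooted_iff_splits.mpr Splits.zero

namespace RealRooted

theorem eq_prod_roots {p : ℝ[X]} (hp : RealRooted p) :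
    p = C p.leadingCoeff * (p.roots.map (X - C ·)).prod :=
  (realRooted_iff_splits.mp hp).eq_prod_roots

theorem aeval_ne_zero {p : ℝ[X]} (hp : RealRooted p) (hp0 : p ≠ 0) {z : ℂ} (hz : z.im ≠ 0) :
    aeval z p ≠ 0 := by
  intro h
  obtain ⟨r, rfl⟩ := (realRooted_iff_splits.mp hp).mem_range_of_isRoot hp0
    (i := algebraMap ℝ ℂ) (by rwa [IsRoot, eval_map_algebraMap])
  exact hz (Complex.ofReal_im r)

theorem of_aeval_ne_zero {p : ℝ[X]} (h : ∀ z : ℂ, z.im ≠ 0 → aeval z p ≠ 0) : RealRooted p := by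
  refine realRooted_iff_splits.mpr
    ((IsAlgClosed.splits _).of_splits_map (algebraMap ℝ ℂ) fun z hz ↦ ?_)
  have hz : aeval z p = 0 := by
    rw [← eval_map_algebraMap]; exact (mem_roots'.mp hz).2
  by_contra hz'
  refine h z (fun him ↦ hz' ⟨z.re, ?_⟩) hz
  exact Complex.ext (by simp) (by simp [him])

end RealRooted

theorem abs_coeff_prod_X_sub_C_le (s : Multiset ℝ) (k : ℕ) :
    |(s.map (X - C ·)).prod.coeff k| ≤ (s.map (1 + |·|)).prod := by
  induction s using Multiset.induction_on generalizing k with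
  | empty => by_cases hk : k = 0 <;> simp [coeff_one, hk]
  | cons a s ih =>
    rw [Multiset.map_cons, Multiset.prod_cons, mul_comm, Multiset.map_cons, Multiset.prod_cons]
    cases k with
    | zero =>
      simp only [mul_coeff_zero, coeff_sub, coeff_X_zero, coeff_C_zero, zero_sub, mul_neg,
        abs_neg, abs_mul]
      nlinarith [ih 0, abs_nonneg a, abs_nonneg ((s.map (X - C ·)).prod.coeff 0)]
    | succ k =>
      rw [coeff_mul_X_sub_C]
      calc _ ≤ |(s.map (X - C ·)).prod.coeff k| + |(s.map (X - C ·)).prod.coeff (k + 1)| * |a| := by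
            rw [← abs_mul]; exact abs_sub _ _
        _ ≤ _ := by nlinarith [ih k, ih (k + 1), abs_nonneg a]

theorem mul_one_add_abs_le_norm_sub (z : ℂ) (r : ℝ) :
    |z.im| / (1 + ‖z‖ + |z.im|) * (1 + |r|) ≤ ‖z - r‖ := by
  have him : |z.im| ≤ ‖z - r‖ := by simpa using Complex.abs_im_le_norm (z - r)
  have hr : |r| ≤ ‖z‖ + ‖z - r‖ := by
    simpa [norm_sub_rev] using norm_le_norm_add_norm_sub' (r : ℂ) z
  rw [div_mul_eq_mul_div, div_le_iff₀ (by positivity)]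
  nlinarith [norm_nonneg z, abs_nonneg z.im, abs_nonneg r]

theorem RealRooted.pow_mul_abs_coeff_le {q : ℝ[X]} (hq : RealRooted q) (z : ℂ) (k : ℕ) :
    (|z.im| / (1 + ‖z‖ + |z.im|)) ^ q.natDegree * |q.coeff k| ≤ ‖aeval z q‖ := by
  set c := |z.im| / (1 + ‖z‖ + |z.im|)
  have hcard : q.roots.card = q.natDegree := splits_iff_card_roots.mp (realRooted_iff_splits.mp hq)
  have hnorm : ‖aeval z q‖ = |q.leadingCoeff| * (q.roots.map (fun r : ℝ ↦ ‖z - r‖)).prod := by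
    conv_lhs => rw [hq.eq_prod_roots]
    simp only [map_mul, aeval_C, map_multiset_prod, Multiset.map_map, Function.comp_def, map_sub,
      aeval_X, norm_mul, Complex.coe_algebraMap, Complex.norm_real, Real.norm_eq_abs]
    congr 1
    exact map_multiset_prod (normHom : ℂ →*₀ ℝ) _ |>.trans (by simp [Multiset.map_map])
  have hcoeff : |q.coeff k| ≤ |q.leadingCoeff| * (q.roots.map (1 + |·|)).prod := by
    conv_lhs => rw [hq.eq_prod_roots]
    rw [coeff_C_mul, abs_mul]
    exact mul_le_mul_of_nonneg_left (abs_coeff_prod_X_sub_C_le _ k) (abs_nonneg _)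
  have hprod : c ^ q.natDegree * (q.roots.map (1 + |·|)).prod
      ≤ (q.roots.map (fun r : ℝ ↦ ‖z - r‖)).prod := by
    rw [← hcard, ← Multiset.prod_replicate, ← Multiset.map_const', ← Multiset.prod_map_mul]
    exact Multiset.prod_map_le_prod_map₀ _ _ (fun r _ ↦ by positivity)
      (fun r _ ↦ mul_one_add_abs_le_norm_sub z r)
  rw [hnorm]
  calc _ ≤ c ^ q.natDegree * (|q.leadingCoeff| * (q.roots.map (1 + |·|)).prod) := by gcongr
    _ ≤ _ := by rw [mul_left_comm]; gcongr

theorem RealRooted.of_tendsto_coeff {ι : Type*} {l : Filter ι} [l.NeBot] {F : ι → ℝ[X]} {T : ℝ[X]}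
    {D : ℕ} (hF : ∀ᶠ i in l, RealRooted (F i)) (hdeg : ∀ i, (F i).natDegree ≤ D)
    (hT : ∀ k, Tendsto (fun i ↦ (F i).coeff k) l (𝓝 (T.coeff k))) : RealRooted T := by
  have hTdeg : T.natDegree ≤ D := natDegree_le_iff_coeff_eq_zero.mpr fun k hk ↦
    tendsto_nhds_unique (hT k) (tendsto_const_nhds.congr fun i ↦
      (coeff_eq_zero_of_natDegree_lt ((hdeg i).trans_lt hk)).symm)
  have haeval (z : ℂ) : Tendsto (fun i ↦ aeval z (F i)) l (𝓝 (aeval z T)) := by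
    have hsum {p : ℝ[X]} (hp : p.natDegree ≤ D) := aeval_eq_sum_range' (Nat.lt_succ_of_le hp) z
    simp only [hsum (hdeg _), hsum hTdeg]
    exact tendsto_finsetSum _ fun k _ ↦
      ((Complex.continuous_ofReal.tendsto _).comp (hT k)).smul_const _
  by_cases hT0 : T = 0
  · exact hT0 ▸ realRooted_zero
  refine RealRooted.of_aeval_ne_zero fun z hz hTz ↦ hT0 (ext fun k ↦ ?_)
  set c := |z.im| / (1 + ‖z‖ + |z.im|)
  have hc : 0 < c := by positivity
  have hc1 : c ≤ 1 := div_le_one_of_le₀ (by linarith [norm_nonneg z]) (by positivity)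
  have hbound : ∀ᶠ i in l, c ^ D * |(F i).coeff k| ≤ ‖aeval z (F i)‖ := hF.mono fun i hi ↦
    (mul_le_mul_of_nonneg_right (pow_le_pow_of_le_one hc.le hc1 (hdeg i)) (abs_nonneg _)).trans
      (hi.pow_mul_abs_coeff_le z k)
  have hlim := le_of_tendsto_of_tendsto (((hT k).abs).const_mul (c ^ D)) (haeval z).norm hbound
  rw [hTz, norm_zero] at hlim
  simpa [hc.ne'] using le_antisymm hlim (by positivity)

theorem norm_two_mul_inv_add_I_le_one {h : ℝ} (hh : 0 < h) {u : ℂ} (hu : h ≤ u.im) :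
    ‖2 * h * u⁻¹ + Complex.I‖ ≤ 1 := by
  have hu0 : u ≠ 0 := by rintro rfl; rw [Complex.zero_im] at hu; linarith
  have hnum : ‖2 * h + Complex.I * u‖ ≤ ‖u‖ := by
    rw [← abs_norm, ← abs_norm u, ← sq_le_sq, Complex.sq_norm, Complex.sq_norm,
      Complex.normSq_apply, Complex.normSq_apply]
    simp only [Complex.add_re, Complex.mul_re, Complex.re_ofNat, Complex.ofReal_re,
      Complex.im_ofNat, Complex.ofReal_im, mul_zero, sub_zero, Complex.I_re, zero_mul,
      Complex.I_im, one_mul, zero_sub, Complex.add_im, Complex.mul_im, add_zero, zero_add]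
    nlinarith
  rw [show 2 * h * u⁻¹ + Complex.I = (2 * h + Complex.I * u) / u by field_simp, norm_div]
  exact div_le_one_of_le₀ hnum (norm_nonneg _)

theorem mul_norm_sq_sum_inv_le (t : Multiset ℂ) {h : ℝ} (hh : 0 < h) (ht : ∀ u ∈ t, h ≤ u.im) :
    h * ‖(t.map (·⁻¹)).sum‖ ^ 2 ≤ -(t.card * (t.map (·⁻¹)).sum.im) := by
  set S := (t.map (·⁻¹)).sum
  have hdisk : ‖2 * h * S + t.card * Complex.I‖ ≤ t.card := by
    have hsum : 2 * h * S + t.card * Complex.I = (t.map (2 * h * ·⁻¹ + Complex.I)).sum := by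
      rw [Multiset.sum_map_add, Multiset.sum_map_mul_left, Multiset.map_const',
        Multiset.sum_replicate, nsmul_eq_mul]
    rw [hsum]
    refine (norm_multiset_sum_le _).trans ?_
    rw [Multiset.map_map]
    simpa using Multiset.sum_map_le_sum_map _ (fun _ ↦ (1 : ℝ)) fun u hu ↦
      norm_two_mul_inv_add_I_le_one hh (ht u hu)
  have hsq := pow_le_pow_left₀ (norm_nonneg _) hdisk 2
  rw [Complex.sq_norm, Complex.normSq_apply] at hsq
  rw [Complex.sq_norm, Complex.normSq_apply]
  simp only [Complex.add_re, Complex.mul_re, Complex.re_ofNat, Complex.ofReal_re,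
    Complex.im_ofNat, Complex.ofReal_im, mul_zero, sub_zero, Complex.mul_im, zero_mul, add_zero,
    Complex.natCast_re, Complex.I_re, Complex.natCast_im, Complex.I_im, mul_one, sub_self,
    Complex.add_im] at hsq
  nlinarith

theorem le_im_of_mul_eq_natCast {v S : ℂ} {M m : ℕ} (hM : 0 < M) (hmM : (m : ℝ) ≤ M) {h : ℝ}
    (hh : 0 < h) (hvS : v * S = M) (hS : h * ‖S‖ ^ 2 ≤ -(m * S.im)) : h ≤ v.im := by
  have hre := congrArg Complex.re hvS
  have him := congrArg Complex.im hvS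
  simp only [Complex.mul_re, Complex.mul_im, Complex.natCast_re, Complex.natCast_im] at hre him
  rw [Complex.sq_norm, Complex.normSq_apply] at hS
  have hMpos : (0 : ℝ) < M := by exact_mod_cast hM
  have hnorm : (S.re * S.re + S.im * S.im) * (v.re ^ 2 + v.im ^ 2) = M ^ 2 := by
    linear_combination (v.re * S.re - v.im * S.im + M) * hre + (v.re * S.im + v.im * S.re) * him
  have himS : S.im * (v.re ^ 2 + v.im ^ 2) = -(M * v.im) := by
    linear_combination v.re * him - v.im * hre
  have key : h * M ^ 2 ≤ m * M * v.im := by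
    calc h * M ^ 2 = h * (S.re * S.re + S.im * S.im) * (v.re ^ 2 + v.im ^ 2) := by
          rw [← hnorm]; ring
      _ ≤ -(m * S.im) * (v.re ^ 2 + v.im ^ 2) := by gcongr
      _ = m * M * v.im := by linear_combination -(m : ℝ) * himS
  by_contra! hv
  have hm : (0 : ℝ) ≤ m := Nat.cast_nonneg _
  rcases le_or_gt v.im 0 with hv0 | hv0
  · nlinarith [mul_nonpos_of_nonneg_of_nonpos (mul_nonneg hm hMpos.le) hv0,
      mul_pos hh (pow_pos hMpos 2)]
  · nlinarith [mul_le_mul_of_nonneg_right hmM (mul_pos hMpos hv0).le,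
      mul_lt_mul_of_pos_right hv (pow_pos hMpos 2)]

section polarDeriv

variable {K : Type*} [CommRing K]

noncomputable def polarDeriv (M : ℕ) (ζ : K) (A : K[X]) : K[X] :=
  C (M : K) * A + (C ζ - X) * derivative A

theorem eval_polarDeriv (M : ℕ) (ζ w : K) (A : K[X]) :
    (polarDeriv M ζ A).eval w = M * A.eval w + (ζ - w) * (derivative A).eval w := by
  simp [polarDeriv]

theorem coeff_polarDeriv (M : ℕ) (ζ : K) (A : K[X]) (k : ℕ) :
    (polarDeriv M ζ A).coeff k = (M - k) * A.coeff k + ζ * (k + 1) * A.coeff (k + 1) := by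
  rw [polarDeriv, coeff_add, coeff_C_mul, sub_mul, coeff_sub, coeff_C_mul, coeff_derivative]
  cases k with
  | zero => simp
  | succ k => rw [coeff_X_mul, coeff_derivative]; push_cast; ring

theorem natDegree_polarDeriv_le {M : ℕ} (ζ : K) {A : K[X]} (hA : A.natDegree ≤ M) :
    (polarDeriv M ζ A).natDegree ≤ M - 1 := by
  refine natDegree_le_iff_coeff_eq_zero.mpr fun k hk ↦ ?_
  rw [coeff_polarDeriv, coeff_eq_zero_of_natDegree_lt (n := k + 1) (by omega)]
  rcases eq_or_lt_of_le (Nat.le_of_pred_lt hk) with rfl | hMk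
  · simp
  · simp [coeff_eq_zero_of_natDegree_lt (hA.trans_lt hMk)]

end polarDeriv

theorem eval_polarDeriv_ne_zero {A : ℂ[X]} {M : ℕ} (hM : 0 < M) (hAM : A.natDegree ≤ M)
    (hA : ∀ w : ℂ, 0 < w.im → A.eval w ≠ 0) {ζ : ℂ} (hζ : 0 < ζ.im) {w : ℂ} (hw : 0 < w.im) :
    (polarDeriv M ζ A).eval w ≠ 0 := by
  intro h0
  set S := (A.roots.map fun z ↦ 1 / (w - z)).sum
  have hlog : (derivative A).eval w = A.eval w * S :=
    (IsAlgClosed.splits A).eval_derivative_eq_eval_mul_sum (hA w hw)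
  have hMS : (w - ζ) * S = M := by
    rw [eval_polarDeriv, hlog] at h0
    have := (mul_eq_zero.mp (by linear_combination h0 : A.eval w * ((M : ℂ) + (ζ - w) * S) = 0))
    linear_combination -this.resolve_left (hA w hw)
  have hS : w.im * ‖S‖ ^ 2 ≤ -(A.roots.card * S.im) := by
    have := mul_norm_sq_sum_inv_le (A.roots.map (w - ·)) hw fun u hu ↦ by
      obtain ⟨z, hz, rfl⟩ := Multiset.mem_map.mp hu
      have : z.im ≤ 0 := not_lt.mp fun hz' ↦ hA z hz' (mem_roots'.mp hz).2
      rw [Complex.sub_im]; linarith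
    simpa [S, Multiset.map_map, Function.comp_def] using this
  have hcard : (A.roots.card : ℝ) ≤ M := by exact_mod_cast (card_roots' A).trans hAM
  have := le_im_of_mul_eq_natCast (by exact_mod_cast hM) hcard hw hMS hS
  rw [Complex.sub_im] at this
  linarith

section schurSzegoComp

variable {K : Type*} [Field K]

noncomputable def schurSzegoComp (d : ℕ) (A B : K[X]) : K[X] :=
  ∑ k ∈ range (d + 1), C (A.coeff k * B.coeff k / d.choose k) * X ^ k

variable (d : ℕ)

theorem coeff_schurSzegoComp (A B : K[X]) (k : ℕ) :
    (schurSzegoComp d A B).coeff k = if k ≤ d then A.coeff k * B.coeff k / d.choose k else 0 := by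
  simp [schurSzegoComp]

theorem natDegree_schurSzegoComp_le (A B : K[X]) : (schurSzegoComp d A B).natDegree ≤ d :=
  natDegree_le_iff_coeff_eq_zero.mpr fun k hk ↦ by
    simp [coeff_schurSzegoComp, not_le.mpr hk]

theorem eval_schurSzegoComp (A B : K[X]) (y : K) : (schurSzegoComp d A B).eval y =
    ∑ k ∈ range (d + 1), A.coeff k * B.coeff k / d.choose k * y ^ k := by
  simp [schurSzegoComp, eval_finsetSum]

theorem map_schurSzegoComp {L : Type*} [Field L] (f : K →+* L) (A B : K[X]) :
    (schurSzegoComp d A B).map f = schurSzegoComp d (A.map f) (B.map f) := by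
  simp [schurSzegoComp, Polynomial.map_sum]

theorem schurSzegoComp_zero_left (B : K[X]) : schurSzegoComp d 0 B = 0 := by
  simp [schurSzegoComp]

theorem schurSzegoComp_C_mul_right (A B : K[X]) (c : K) :
    schurSzegoComp d A (C c * B) = C c * schurSzegoComp d A B := by
  simp only [schurSzegoComp, mul_sum, coeff_C_mul, ← mul_assoc, ← C_mul]
  congr! 3
  ring

variable [CharZero K]

theorem add_one_div_add_one_choose (k : ℕ) (hk : k ≤ d) :
    (d + 1 : K) / (d + 1).choose k = (d + 1 - k) / d.choose k := by
  rw [div_eq_div_iff (by exact_mod_cast (Nat.choose_pos (by omega)).ne')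
    (by exact_mod_cast (Nat.choose_pos hk).ne')]
  have h : ((d.choose k * (d + 1) : ℕ) : K) = ((d + 1).choose k * (d + 1 - k) : ℕ) :=
    congrArg _ (Nat.choose_mul_succ_eq d k)
  push_cast [Nat.cast_sub (show k ≤ d + 1 by omega)] at h
  linear_combination h

theorem add_one_div_add_one_choose_add_one (k : ℕ) (hk : k ≤ d) :
    (d + 1 : K) / (d + 1).choose (k + 1) = (k + 1) / d.choose k := by
  rw [div_eq_div_iff (by exact_mod_cast (Nat.choose_pos (by omega)).ne')
    (by exact_mod_cast (Nat.choose_pos hk).ne')]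
  exact_mod_cast (Nat.add_one_mul_choose_eq d k).trans (by ring)

theorem eval_schurSzegoComp_X_add_C_mul {B : K[X]} (hB : B.natDegree ≤ d) (A : K[X]) {b : K}
    (hb : b ≠ 0) (y : K) :
    (d + 1) * (schurSzegoComp (d + 1) A ((X + C b) * B)).eval y =
      b * (schurSzegoComp d (polarDeriv (d + 1) (y / b) A) B).eval y := by
  have hBtop : B.coeff (d + 1) = 0 := coeff_eq_zero_of_natDegree_lt (by omega)
  have hconst : (d + 1 : K) * ∑ k ∈ range (d + 2), A.coeff k * (b * B.coeff k) /
      (d + 1).choose k * y ^ k =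
      ∑ k ∈ range (d + 1), b * (d + 1 - k) * A.coeff k * B.coeff k / d.choose k * y ^ k := by
    rw [sum_range_succ, hBtop, mul_zero, mul_zero, zero_div, zero_mul, add_zero, mul_sum]
    refine sum_congr rfl fun k hk ↦ ?_
    linear_combination (A.coeff k * b * B.coeff k * y ^ k) *
      add_one_div_add_one_choose (K := K) d k (Nat.lt_succ_iff.mp (mem_range.mp hk))
  have hshift : (d + 1 : K) * ∑ k ∈ range (d + 2), A.coeff k * (X * B).coeff k /
      (d + 1).choose k * y ^ k =
      ∑ k ∈ range (d + 1), y * (k + 1) * A.coeff (k + 1) * B.coeff k / d.choose k * y ^ k := by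
    rw [sum_range_succ', coeff_X_mul_zero, mul_zero, zero_div, zero_mul, add_zero, mul_sum]
    refine sum_congr rfl fun k hk ↦ ?_
    rw [coeff_X_mul]
    linear_combination (A.coeff (k + 1) * B.coeff k * y ^ (k + 1)) *
      add_one_div_add_one_choose_add_one (K := K) d k (Nat.lt_succ_iff.mp (mem_range.mp hk))
  calc (d + 1) * (schurSzegoComp (d + 1) A ((X + C b) * B)).eval y
      = (d + 1) * (∑ k ∈ range (d + 2), A.coeff k * (X * B).coeff k / (d + 1).choose k * y ^ k +
          ∑ k ∈ range (d + 2), A.coeff k * (b * B.coeff k) / (d + 1).choose k * y ^ k) := by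
        rw [eval_schurSzegoComp, ← sum_add_distrib]
        refine congrArg _ (sum_congr rfl fun k _ ↦ ?_)
        rw [add_mul, coeff_add, coeff_C_mul]
        ring
    _ = _ := by
        rw [mul_add, hconst, hshift, eval_schurSzegoComp, mul_sum, ← sum_add_distrib]
        refine sum_congr rfl fun k _ ↦ ?_
        rw [coeff_polarDeriv]
        field_simp
        push_cast
        ring

end schurSzegoComp

theorem eval_schurSzegoComp_prod_ne_zero (s : Multiset ℝ) (hs : ∀ b ∈ s, 0 < b) {A : ℂ[X]}
    (hAd : A.natDegree ≤ s.card) (hA : ∀ w : ℂ, 0 < w.im → A.eval w ≠ 0) {y : ℂ} (hy : 0 < y.im) :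
    (schurSzegoComp s.card A (s.map fun b : ℝ ↦ X + C (b : ℂ)).prod).eval y ≠ 0 := by
  induction s using Multiset.induction_on generalizing A with
  | empty =>
    obtain ⟨a, rfl⟩ : ∃ a, A = C a := ⟨_, eq_C_of_natDegree_le_zero (by simpa using hAd)⟩
    simpa [eval_schurSzegoComp] using hA Complex.I (by simp)
  | cons b s ih =>
    have hb : 0 < b := hs b (Multiset.mem_cons_self b s)
    rw [Multiset.card_cons] at hAd ⊢
    have hdeg : (s.map fun b : ℝ ↦ X + C (b : ℂ)).prod.natDegree ≤ s.card :=
      (natDegree_multiset_prod_le _).trans (by simp [Multiset.map_map])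
    have hstep := eval_schurSzegoComp_X_add_C_mul s.card hdeg A
      (Complex.ofReal_ne_zero.mpr hb.ne') y
    have hpolar := ih (fun b hb ↦ hs b (Multiset.mem_cons_of_mem hb))
      (natDegree_polarDeriv_le (M := s.card + 1) _ hAd) fun w hw ↦
        eval_polarDeriv_ne_zero s.card.succ_pos hAd hA
          (ζ := y / b) (by simpa using div_pos hy hb) hw
    rw [Multiset.map_cons, Multiset.prod_cons]
    intro h0
    rw [h0, mul_zero] at hstep
    exact hpolar ((mul_eq_zero.mp hstep.symm).resolve_left (by exact_mod_cast hb.ne'))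

theorem RealRooted.schurSzegoComp_C_mul_prod {A : ℝ[X]} (hA : RealRooted A) (s : Multiset ℝ)
    (hs : ∀ b ∈ s, 0 < b) (hAd : A.natDegree ≤ s.card) (c : ℝ) :
    RealRooted (schurSzegoComp s.card A (C c * (s.map (X + C ·)).prod)) := by
  rw [schurSzegoComp_C_mul_right, realRooted_iff_splits]
  refine Splits.C_mul (realRooted_iff_splits.mp ?_) c
  rcases eq_or_ne A 0 with rfl | hA0
  · rw [schurSzegoComp_zero_left]; exact realRooted_zero
  have hupper (z : ℂ) (hz : 0 < z.im) :
      aeval z (schurSzegoComp s.card A (s.map (X + C ·)).prod) ≠ 0 := by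
    rw [← eval_map_algebraMap, map_schurSzegoComp, Polynomial.map_multiset_prod, Multiset.map_map]
    simpa [Function.comp_def] using eval_schurSzegoComp_prod_ne_zero s hs
      (A := A.map (algebraMap ℝ ℂ)) (by rwa [natDegree_map]) (fun w hw ↦ by
        rw [eval_map_algebraMap]; exact hA.aeval_ne_zero hA0 hw.ne') hz
  refine RealRooted.of_aeval_ne_zero fun z hz ↦ ?_
  rcases hz.lt_or_gt with hz | hz
  · have := hupper (Complex.conjAe z) (by simpa using hz)
    rwa [aeval_algHom_apply, _root_.map_ne_zero] at this
  · exact hupper z hz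

theorem tendsto_coeff_comp_X_add_C_mul_pow (B : ℝ[X]) (m k : ℕ) :
    Tendsto (fun ε ↦ (B.comp (X + C ε) * (C ε * X + 1) ^ m).coeff k) (𝓝 0) (𝓝 (B.coeff k)) := by
  -- `ε` becomes the variable of the coefficient ring, so each coefficient is a polynomial in `ε`
  set F : ℝ[X][X] := (B.map C).comp (X + C X) * (C X * X + 1) ^ m
  have hF (ε : ℝ) : F.map (evalRingHom ε) = B.comp (X + C ε) * (C ε * X + 1) ^ m := by
    have : (evalRingHom ε).comp C = RingHom.id ℝ := RingHom.ext fun _ ↦ eval_C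
    simp [F, map_comp, Polynomial.map_map, this]
  have hcoeff (ε : ℝ) : (F.coeff k).eval ε = (B.comp (X + C ε) * (C ε * X + 1) ^ m).coeff k := by
    rw [← hF, coeff_map, coe_evalRingHom]
  have h0 : (F.coeff k).eval 0 = B.coeff k := by simp [hcoeff]
  exact h0 ▸ ((F.coeff k).continuous.tendsto 0).congr hcoeff

theorem RealRooted.comp_X_add_C_mul_pow_eq_prod {B : ℝ[X]} (hB : RealRooted B) (m : ℕ) {ε : ℝ}
    (hε : ε ≠ 0) : B.comp (X + C ε) * (C ε * X + 1) ^ m = C (B.leadingCoeff * ε ^ m) *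
      ((B.roots.map (ε - ·) + Multiset.replicate m ε⁻¹).map (X + C ·)).prod := by
  have hlin : C ε * X + 1 = C ε * (X + C ε⁻¹) := by
    rw [mul_add, ← C_mul, mul_inv_cancel₀ hε, C_1]
  conv_lhs => rw [hB.eq_prod_roots]
  rw [mul_comp, C_comp, multiset_prod_comp, hlin, mul_pow, ← C_pow, Multiset.map_add,
    Multiset.prod_add, Multiset.map_replicate, Multiset.prod_replicate, Multiset.map_map,
    Multiset.map_map, C_mul]
  have hshift (r : ℝ) : (X - C r).comp (X + C ε) = X + C (ε - r) := by
    rw [sub_comp, X_comp, C_comp, C_sub]; ring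
  simp only [Function.comp_def, hshift]
  ring

theorem RealRooted.schurSzegoComp_of_roots_nonpos {A B : ℝ[X]} (hA : RealRooted A)
    (hB : RealRooted B) (hroots : ∀ r ∈ B.roots, r ≤ 0) {d : ℕ} (hAd : A.natDegree ≤ d)
    (hBd : B.natDegree ≤ d) : RealRooted (schurSzegoComp d A B) := by
  set m := d - B.natDegree
  have hcard : B.roots.card + m = d := by
    rw [splits_iff_card_roots.mp (realRooted_iff_splits.mp hB)]; omega
  refine RealRooted.of_tendsto_coeff (l := 𝓝[>] 0) (D := d)
    (F := fun ε ↦ schurSzegoComp d A (B.comp (X + C ε) * (C ε * X + 1) ^ m)) ?_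
    (fun _ ↦ natDegree_schurSzegoComp_le d _ _) fun k ↦ ?_
  · filter_upwards [self_mem_nhdsWithin] with ε (hε : 0 < ε)
    rw [hB.comp_X_add_C_mul_pow_eq_prod m hε.ne']
    set s := B.roots.map (ε - ·) + Multiset.replicate m ε⁻¹
    have hs : s.card = d := by simp [s, hcard]
    have hpos : ∀ b ∈ s, 0 < b := by
      simp only [s, Multiset.mem_add, Multiset.mem_map, Multiset.mem_replicate]
      rintro b (⟨r, hr, rfl⟩ | ⟨-, rfl⟩)
      · linarith [hroots r hr]
      · positivity
    simpa [hs] using hA.schurSzegoComp_C_mul_prod s hpos (hs ▸ hAd) (B.leadingCoeff * ε ^ m)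
  · simp only [coeff_schurSzegoComp]
    split_ifs
    · exact (((tendsto_coeff_comp_X_add_C_mul_pow B m k).mono_left nhdsWithin_le_nhds).const_mul
        _).div_const _
    · exact tendsto_const_nhds

theorem roots_nonpos_of_coeff_nonneg {p : ℝ[X]} (hp : ∀ k, 0 ≤ p.coeff k) :
    ∀ r ∈ p.roots, r ≤ 0 := by
  intro r hr
  obtain ⟨hp0, hroot⟩ := mem_roots'.mp hr
  by_contra! hr0
  have hpos : 0 < p.eval r := by
    rw [eval_eq_sum_range]
    refine sum_pos' (fun k _ ↦ mul_nonneg (hp k) (pow_nonneg hr0.le k))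
      ⟨p.natDegree, self_mem_range_succ _, mul_pos ?_ (pow_pos hr0 _)⟩
    exact (hp _).lt_of_ne' (leadingCoeff_ne_zero.mpr hp0)
  exact hpos.ne' hroot

theorem coeff_gammaOp (l : ℕ → ℝ) (p : ℝ[X]) (k : ℕ) : (GammaOp l p).coeff k = l k * p.coeff k := by
  simp only [GammaOp, finsetSum_coeff, coeff_C_mul_X_pow, sum_ite_eq, mem_range]
  split_ifs with hk
  · rfl
  · rw [coeff_eq_zero_of_natDegree_lt (by omega), mul_zero]

theorem coeff_jensenPoly (γ : ℕ → ℝ) (d n k : ℕ) :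
    (JensenPoly γ d n).coeff k = if k ≤ d then (d.choose k : ℝ) * γ (k + n) else 0 := by
  simp only [JensenPoly, finsetSum_coeff, coeff_C_mul_X_pow, sum_ite_eq, mem_range,
    Nat.lt_succ_iff]

theorem natDegree_jensenPoly_le (γ : ℕ → ℝ) (d n : ℕ) : (JensenPoly γ d n).natDegree ≤ d :=
  natDegree_le_iff_coeff_eq_zero.mpr fun k hk ↦ by simp [coeff_jensenPoly, not_le.mpr hk]

theorem coeff_jensenPoly_nonneg {γ : ℕ → ℝ} (hγ : ∀ k, 0 ≤ γ k) (d n k : ℕ) :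
    0 ≤ (JensenPoly γ d n).coeff k := by
  rw [coeff_jensenPoly]
  split_ifs
  exacts [mul_nonneg (Nat.cast_nonneg _) (hγ _), le_rfl]

theorem gammaOp_X_add_C_one_pow (γ : ℕ → ℝ) (d n : ℕ) :
    GammaOp (fun k ↦ γ (k + n)) ((X + C 1) ^ d) = JensenPoly γ d n := by
  ext k
  rw [coeff_gammaOp, coeff_jensenPoly, coeff_X_add_C_pow, one_pow, one_mul]
  split_ifs with hk
  · ring
  · simp [Nat.choose_eq_zero_of_lt (not_le.mp hk)]

theorem gammaOp_eq_schurSzegoComp_jensenPoly (γ : ℕ → ℝ) {d : ℕ} (n : ℕ) {p : ℝ[X]}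
    (hp : p.natDegree ≤ d) :
    GammaOp (fun k ↦ γ (k + n)) p = schurSzegoComp d p (JensenPoly γ d n) := by
  ext k
  rw [coeff_gammaOp, coeff_schurSzegoComp, coeff_jensenPoly]
  split_ifs with hk
  · field_simp [(Nat.choose_pos hk).ne']
  · rw [coeff_eq_zero_of_natDegree_lt (by omega), mul_zero]

theorem orderMultSeq_iff_jensen (γ : ℕ → ℝ) (hnonneg : ∀ k, 0 ≤ γ k) (d N : ℕ) :
    (∀ n ≥ N, ∀ p : Polynomial ℝ, p.natDegree ≤ d → RealRooted p →
      RealRooted (GammaOp (fun k => γ (k + n)) p)) ↔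
    (∀ n ≥ N, RealRooted (JensenPoly γ d n)) := by
  refine ⟨fun h n hn ↦ ?_, fun h n hn p hpd hp ↦ ?_⟩
  · rw [← gammaOp_X_add_C_one_pow]
    refine h n hn _ ?_ (realRooted_iff_splits.mpr ((Splits.X_add_C 1).pow d))
    rw [natDegree_pow, natDegree_X_add_C, mul_one]
  · rw [gammaOp_eq_schurSzegoComp_jensenPoly γ n hpd]
    exact hp.schurSzegoComp_of_roots_nonpos (h n hn)
      (roots_nonpos_of_coeff_nonneg (coeff_jensenPoly_nonneg hnonneg d n)) hpd
      (natDegree_jensenPoly_le γ d n)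
end
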